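/- arXiv:2102.02321 — 3 statements merged into one kernel-verified Lean document; each statement's English description precedes it below -/
import Mathlib

section
/- For every integer d ≥ 1 and every constant α ∈ (0, 1/2) there exists a constant c > 0 such that the following holds: if H is the complete bipartite n-vertex graph with parts A and B of sizes ⌊αn⌋ and n − ⌊αn⌋, then asymptotically almost surely the union graph H ∪ G^d(n, (c/n)^{1/d}) is not Hamiltonian. -/
open MeasureTheory Filter

/-- The uniform probability measure on `n` independent points in `[0,1]^d`. -/
noncomputable def unifCube (d n : ℕ) :
    Measure (Fin n → EuclideanSpace ℝ (Fin d)) :=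
  (volume : Measure (Fin n → EuclideanSpace ℝ (Fin d))).restrict
    {x | ∀ i, ∀ k, x i k ∈ Set.Icc (0 : ℝ) 1}

/-- The geometric graph on `n` vertices given by positions `x` and radius `r`. -/
def geoGraph (d n : ℕ) (r : ℝ) (x : Fin n → EuclideanSpace ℝ (Fin d)) :
    SimpleGraph (Fin n) :=
  SimpleGraph.fromRel (fun i j => dist (x i) (x j) ≤ r)

/-!
A Hamiltonian cycle `v₀ v₁ … v_{n-1}` contains the `⌊n/2⌋` disjoint edges `v_{2k} v_{2k+1}`, and at
most `|A| = ⌊αn⌋` of them meet `A`. Since every edge of `H` meets `A`, the remaining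
`m = ⌊n/2⌋ - ⌊αn⌋ ≥ (1/2 - α) n - 1` disjoint edges are geometric. For a fixed matching the
events "this pair is at distance `≤ r`" are independent, each of probability at most
`vol(B(0,1)) r^d = vol(B(0,1)) c / n`. A union bound over the at most `2ⁿ nᵐ` matchings of size
`m` (the set of first endpoints, then the partner of each) bounds the probability of a
Hamiltonian cycle by `2ⁿ (c vol(B(0,1)))ᵐ`, which is at most `2⁻ⁿ` once `c` is small.
-/

open Set
open scoped ENNReal

open Finset in
theorem Function.Injective.card_filter_mem_or_mem_le {ι κ : Type*} [Fintype κ] [DecidableEq ι]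
    {a b : κ → ι} (hab : Function.Injective (Sum.elim a b)) (A : Finset ι) :
    #{k | a k ∈ A ∨ b k ∈ A} ≤ #A := by
  obtain ⟨ha, hb, hne⟩ := Sum.elim_injective.mp hab
  refine card_le_card_of_injOn (fun k => if a k ∈ A then a k else b k) (fun k hk => ?_)
    (fun k _ l _ hkl => ?_)
  · simp only [coe_filter, Set.mem_ofPred_eq, Finset.mem_univ, true_and] at hk
    simp only [mem_coe]
    split_ifs with h
    · exact h
    · exact hk.resolve_left h
  · dsimp only at hkl
    split_ifs at hkl
    · exact ha hkl
    · exact absurd hkl (hne k l)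
    · exact absurd hkl.symm (hne l k)
    · exact hb hkl

-- Injectivity of `Sum.elim a b` says that the `2 * m` endpoints are pairwise distinct.
def HasMatching {ι : Type*} (R : ι → ι → Prop) (m : ℕ) : Prop :=
  ∃ a b : Fin m → ι, Function.Injective (Sum.elim a b) ∧ ∀ k, R (a k) (b k)

namespace HasMatching

open Finset

variable {ι : Type*} {R S : ι → ι → Prop} {m : ℕ}

theorem zero : HasMatching R 0 :=
  ⟨Fin.elim0, Fin.elim0, Function.injective_of_subsingleton _, fun k => k.elim0⟩

theorem of_le_card {κ : Type*} [Fintype κ] {a b : κ → ι} (hab : Function.Injective (Sum.elim a b))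
    (hR : ∀ k, R (a k) (b k)) (hm : m ≤ Fintype.card κ) : HasMatching R m := by
  obtain ⟨e⟩ :=
    Function.Embedding.nonempty_of_card_le (α := Fin m) (β := κ) (by rwa [Fintype.card_fin])
  refine ⟨a ∘ e, b ∘ e, ?_, fun k => hR (e k)⟩
  rw [← Sum.elim_comp_map]
  exact hab.comp (Sum.map_injective.mpr ⟨e.injective, e.injective⟩)

theorem mono (h : HasMatching R m) (hRS : ∀ u v, R u v → S u v) : HasMatching S m :=
  let ⟨a, b, hab, hR⟩ := h
  ⟨a, b, hab, fun k => hRS _ _ (hR k)⟩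

theorem avoiding [DecidableEq ι] (h : HasMatching R m) (A : Finset ι) :
    HasMatching (fun u v => R u v ∧ u ∉ A ∧ v ∉ A) (m - #A) := by
  obtain ⟨a, b, hab, hR⟩ := h
  refine of_le_card (κ := {k // ¬ (a k ∈ A ∨ b k ∈ A)}) (a := a ∘ (↑)) (b := b ∘ (↑)) ?_
    (fun k => ⟨hR k, not_or.mp k.2⟩) ?_
  · rw [← Sum.elim_comp_map]
    exact hab.comp (Sum.map_injective.mpr ⟨Subtype.val_injective, Subtype.val_injective⟩)
  · rw [Fintype.card_subtype_compl, Fintype.card_fin, Fintype.card_subtype]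
    have := hab.card_filter_mem_or_mem_le A
    omega

theorem exists_finset (h : HasMatching R m) :
    ∃ S : Finset ι, #S = m ∧ ∃ b : S → ι,
      Function.Injective (Sum.elim ((↑) : S → ι) b) ∧ ∀ s : S, R s (b s) := by
  obtain ⟨a, b, hab, hR⟩ := h
  obtain ⟨ha, hb, hne⟩ := Sum.elim_injective.mp hab
  let idx (s : univ.map ⟨a, ha⟩) : Fin m := (mem_map.mp s.2).choose
  have hidx (s : univ.map ⟨a, ha⟩) : a (idx s) = s := (mem_map.mp s.2).choose_spec.2
  refine ⟨univ.map ⟨a, ha⟩, by simp, b ∘ idx, Sum.elim_injective.mpr ⟨Subtype.val_injective,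
    fun s t hst => ?_, fun s t hst => ?_⟩, fun s => hidx s ▸ hR (idx s)⟩
  · rw [Subtype.ext_iff, ← hidx s, ← hidx t, hb hst]
  · exact hne (idx s) (idx t) ((hidx s).trans hst)

end HasMatching

theorem SimpleGraph.IsHamiltonian.hasMatching {V : Type*} [Fintype V] [DecidableEq V]
    {G : SimpleGraph V} (hG : G.IsHamiltonian) : HasMatching G.Adj (Fintype.card V / 2) := by
  by_cases hV : Fintype.card V = 1
  · rw [hV]
    exact HasMatching.zero
  obtain ⟨u, p, hp⟩ := hG hV
  have hinj := hp.isCycle.getVert_injOn'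
  rw [hp.length_eq] at hinj
  have hmem {i : ℕ} (k : Fin (Fintype.card V / 2)) (hi : i ≤ 2 * k + 1) :
      i ∈ {i | i ≤ Fintype.card V - 1} := by
    simp only [Set.mem_ofPred_eq]; omega
  refine ⟨fun k => p.getVert (2 * k), fun k => p.getVert (2 * k + 1), Sum.elim_injective.mpr
    ⟨fun k l h => ?_, fun k l h => ?_, fun k l h => ?_⟩, fun k => ?_⟩
  · have := hinj (hmem k (by omega)) (hmem l (by omega)) h
    omega
  · have := hinj (hmem k le_rfl) (hmem l le_rfl) h
    omega
  · have := hinj (hmem k (by omega)) (hmem l le_rfl) h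
    omega
  · exact p.adj_getVert_succ (by rw [hp.length_eq]; omega)

section ProductMeasure

variable {E : Type*} [MeasurableSpace E] (μ : Measure E) [IsProbabilityMeasure μ]

theorem measurePreserving_comp_of_injective {κ ι : Type*} [Fintype κ] [Fintype ι] {g : κ → ι}
    (hg : Function.Injective g) :
    MeasurePreserving (fun x : ι → E => x ∘ g) (Measure.pi fun _ => μ) (Measure.pi fun _ => μ) := by
  classical
  have hmeas : Measurable (fun x : ι → E => x ∘ g) :=
    measurable_pi_lambda _ fun j => measurable_pi_apply (g j)
  refine ⟨hmeas, (Measure.pi_eq fun s hs => ?_).symm⟩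
  set t : ι → Set E := Function.extend g s fun _ => univ
  have hpre : (fun x : ι → E => x ∘ g) ⁻¹' univ.pi s = univ.pi t := by
    ext x
    simp only [mem_preimage, mem_univ_pi, Function.comp_apply]
    refine ⟨fun h i => ?_, fun h j => hg.extend_apply s _ j ▸ h (g j)⟩
    by_cases hi : ∃ j, g j = i
    · obtain ⟨j, rfl⟩ := hi
      simpa only [t, hg.extend_apply] using h j
    · simp only [t, Function.extend_apply' _ _ _ hi, mem_univ]
  rw [Measure.map_apply hmeas (MeasurableSet.univ_pi hs), hpre, Measure.pi_pi,
    ← Finset.prod_subset (Finset.subset_univ (Finset.univ.image g)), Finset.prod_image hg.injOn]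
  · simp only [t, hg.extend_apply]
  · intro i _ hi
    simp only [Finset.mem_image, Finset.mem_univ, true_and] at hi
    simp [t, Function.extend_apply' _ _ _ hi]

theorem prod_apply_le_of_forall_le {ν : Measure E} [SFinite ν] {D : Set (E × E)}
    (hD : MeasurableSet D) {q : ℝ≥0∞} (hq : ∀ z, ν (Prod.mk z ⁻¹' D) ≤ q) : (μ.prod ν) D ≤ q := by
  rw [Measure.prod_apply hD]
  calc ∫⁻ z, ν (Prod.mk z ⁻¹' D) ∂μ ≤ ∫⁻ _, q ∂μ := lintegral_mono hq
    _ = q := by simp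

theorem measure_pi_forall_pair_mem_le {κ ι : Type*} [Fintype κ] [Fintype ι] {a b : κ → ι}
    (hab : Function.Injective (Sum.elim a b)) {D : Set (E × E)} (hD : MeasurableSet D) {q : ℝ≥0∞}
    (hq : ∀ z, μ (Prod.mk z ⁻¹' D) ≤ q) :
    Measure.pi (fun _ : ι => μ) {x | ∀ k, (x (a k), x (b k)) ∈ D} ≤ q ^ Fintype.card κ := by
  have hΦ := (measurePreserving_arrowProdEquivProdArrow E E κ (fun _ => μ) (fun _ => μ)).symm.comp
    ((measurePreserving_sumPiEquivProdPi (fun _ : κ ⊕ κ => μ)).comp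
      (measurePreserving_comp_of_injective μ hab))
  have hpre : {x : ι → E | ∀ k, (x (a k), x (b k)) ∈ D} =
      ((MeasurableEquiv.arrowProdEquivProdArrow E E κ).symm ∘
        (MeasurableEquiv.sumPiEquivProdPi fun _ => E) ∘ fun x => x ∘ Sum.elim a b) ⁻¹'
        univ.pi fun _ => D := by
    ext x
    simp only [mem_ofPred_eq, mem_preimage, Function.comp_apply, Set.mem_pi, mem_univ, forall_const]
    rfl
  rw [hpre, hΦ.measure_preimage (MeasurableSet.univ_pi fun _ => hD).nullMeasurableSet,
    Measure.pi_pi, Finset.prod_const, Finset.card_univ]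
  exact pow_le_pow_left₀ bot_le (prod_apply_le_of_forall_le μ hD hq) _

open Finset in
theorem measure_pi_hasMatching_le {ι : Type*} [Fintype ι] {D : Set (E × E)}
    (hD : MeasurableSet D) {q : ℝ≥0∞} (hq : ∀ z, μ (Prod.mk z ⁻¹' D) ≤ q) (m : ℕ) :
    Measure.pi (fun _ : ι => μ) {x | HasMatching (fun i j => (x i, x j) ∈ D) m} ≤
      ((Fintype.card ι).choose m : ℝ≥0∞) * (Fintype.card ι : ℝ≥0∞) ^ m * q ^ m := by
  classical
  let event (S : Finset ι) (b : S → ι) : Set (ι → E) :=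
    {x | Function.Injective (Sum.elim ((↑) : S → ι) b) ∧ ∀ s : S, (x s, x (b s)) ∈ D}
  have hevent (S : Finset ι) (hS : S ∈ powersetCard m univ) (b : S → ι) :
      Measure.pi (fun _ : ι => μ) (event S b) ≤ q ^ m := by
    by_cases hb : Function.Injective (Sum.elim ((↑) : S → ι) b)
    · rw [← (mem_powersetCard_univ.mp hS), ← Fintype.card_coe]
      exact (measure_mono fun x hx => hx.2).trans (measure_pi_forall_pair_mem_le μ hb hD hq)
    · simp only [event, hb, false_and, ofPred_false, measure_empty, zero_le]
  calc Measure.pi (fun _ : ι => μ) {x | HasMatching (fun i j => (x i, x j) ∈ D) m}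
      ≤ Measure.pi (fun _ : ι => μ) (⋃ S ∈ powersetCard m univ, ⋃ b, event S b) := by
        refine measure_mono fun x hx => ?_
        obtain ⟨S, hS, b, hb, hD⟩ := HasMatching.exists_finset (Set.mem_ofPred.mp hx)
        simp only [mem_iUnion]
        exact ⟨S, mem_powersetCard_univ.mpr hS, b, hb, hD⟩
    _ ≤ ∑ S ∈ powersetCard m univ, ∑ b, Measure.pi (fun _ : ι => μ) (event S b) :=
        (measure_biUnion_finset_le _ _).trans (sum_le_sum fun S _ => measure_iUnion_fintype_le _ _)
    _ ≤ ∑ S ∈ powersetCard m univ, ∑ _b : S → ι, q ^ m :=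
        sum_le_sum fun S hS => sum_le_sum fun b _ => hevent S hS b
    _ = (Fintype.card ι).choose m * Fintype.card ι ^ m * q ^ m := by
        rw [sum_congr rfl fun S hS => by rw [sum_const, card_univ, Fintype.card_fun,
          Fintype.card_coe, mem_powersetCard_univ.mp hS]]
        simp [card_powersetCard, mul_assoc]

end ProductMeasure

def unitCube (d : ℕ) : Set (EuclideanSpace ℝ (Fin d)) := {y | ∀ k, y k ∈ Icc (0 : ℝ) 1}

theorem volume_unitCube (d : ℕ) : volume (unitCube d) = 1 := by
  have : unitCube d = (MeasurableEquiv.toLp 2 (Fin d → ℝ)).symm ⁻¹' univ.pi fun _ => Icc 0 1 := by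
    ext y
    simp only [unitCube, mem_ofPred_eq, mem_preimage, mem_univ_pi]
    rfl
  rw [this, (EuclideanSpace.volume_preserving_symm_measurableEquiv_toLp (Fin d)).measure_preimage
    (MeasurableSet.univ_pi fun _ => measurableSet_Icc).nullMeasurableSet, volume_pi_pi]
  simp

instance (d : ℕ) : IsProbabilityMeasure (volume.restrict (unitCube d)) :=
  ⟨by rw [Measure.restrict_apply_univ, volume_unitCube]⟩

theorem unifCube_eq_pi (d n : ℕ) :
    unifCube d n = Measure.pi fun _ : Fin n => volume.restrict (unitCube d) := by
  rw [unifCube, volume_pi, ← Measure.restrict_pi_pi]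
  congr 1
  ext x
  simp [unitCube]

theorem volume_restrict_unitCube_closedBall_le {d : ℕ} (z : EuclideanSpace ℝ (Fin d)) {r : ℝ}
    (hr : 0 ≤ r) : volume.restrict (unitCube d) (Metric.closedBall z r) ≤
      ENNReal.ofReal (r ^ d) * volume (Metric.ball (0 : EuclideanSpace ℝ (Fin d)) 1) := by
  refine (Measure.restrict_le_self _).trans_eq ?_
  rw [Measure.addHaar_closedBall _ z hr, finrank_euclideanSpace_fin]

instance (d n : ℕ) : IsProbabilityMeasure (unifCube d n) :=
  unifCube_eq_pi d n ▸ inferInstance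

theorem measure_pi_isHamiltonian_sup_geoGraph_le {d n : ℕ} (μ : Measure (EuclideanSpace ℝ (Fin d)))
    [IsProbabilityMeasure μ] {r : ℝ} {q : ℝ≥0∞} (hq : ∀ z, μ (Metric.closedBall z r) ≤ q)
    {H : SimpleGraph (Fin n)} (A : Finset (Fin n)) (hH : ∀ i j, H.Adj i j → i ∈ A ∨ j ∈ A) :
    Measure.pi (fun _ => μ) {x | (H ⊔ geoGraph d n r x).IsHamiltonian} ≤
      (n.choose (n / 2 - A.card) : ℝ≥0∞) * (n : ℝ≥0∞) ^ (n / 2 - A.card) *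
        q ^ (n / 2 - A.card) := by
  let D : Set (EuclideanSpace ℝ (Fin d) × EuclideanSpace ℝ (Fin d)) := {p | dist p.1 p.2 ≤ r}
  have hD : MeasurableSet D := (isClosed_le (by fun_prop) continuous_const).measurableSet
  have hslice (z) : μ (Prod.mk z ⁻¹' D) ≤ q := by
    convert hq z using 2
    ext y
    simp [D, dist_comm]
  refine (measure_mono fun x hx => ?_).trans
    (Fintype.card_fin n ▸ measure_pi_hasMatching_le μ hD hslice _)
  refine Set.mem_ofPred.mpr ?_
  refine (Fintype.card_fin n ▸ (hx.hasMatching.avoiding A)).mono fun u v ⟨huv, hu, hv⟩ => ?_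
  rcases huv with huv | huv
  · exact absurd (hH u v huv) (not_or.mpr ⟨hu, hv⟩)
  · rcases (SimpleGraph.fromRel_adj _ _ _).mp huv with ⟨-, h | h⟩
    · exact h
    · exact (dist_comm _ _).trans_le h

theorem tendsto_measure_compl_of_tendsto_zero {X : ℕ → Type*} [∀ n, MeasurableSpace (X n)]
    {μ : ∀ n, Measure (X n)} [∀ n, IsProbabilityMeasure (μ n)] {s : ∀ n, Set (X n)}
    (h : Tendsto (fun n => μ n (s n)) atTop (nhds 0)) :
    Tendsto (fun n => μ n (s n)ᶜ) atTop (nhds 1) := by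
  have hlow : Tendsto (fun n => 1 - μ n (s n)) atTop (nhds 1) := by
    simpa using ENNReal.Tendsto.sub tendsto_const_nhds h (Or.inl ENNReal.one_ne_top)
  refine tendsto_of_tendsto_of_tendsto_of_le_of_le hlow tendsto_const_nhds (fun n => ?_)
    (fun n => prob_le_one)
  rw [tsub_le_iff_left, ← measure_univ (μ := μ n), ← union_compl_self (s n)]
  exact measure_union_le _ _

theorem exists_two_mul_le_mul_half_sub_floor {α : ℝ} (hα₀ : 0 ≤ α) (hα : α < 1 / 2) :
    ∃ K : ℕ, ∀ n ≥ K, 2 * n ≤ K * (n / 2 - ⌊α * n⌋₊) := by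
  obtain ⟨K, hK⟩ := exists_nat_ge (3 / (1 / 2 - α))
  refine ⟨K, fun n hn => ?_⟩
  have hfloor : (⌊α * n⌋₊ : ℝ) ≤ α * n := Nat.floor_le (by positivity)
  have hK' : 3 ≤ K * (1 / 2 - α) := by rwa [div_le_iff₀ (by linarith)] at hK
  have hn' : (K : ℝ) ≤ n := by exact_mod_cast hn
  have h2 : 2 * ⌊α * n⌋₊ ≤ n := by
    have : (2 * ⌊α * n⌋₊ : ℝ) ≤ n := by nlinarith
    exact_mod_cast this
  have hm : (n : ℝ) - 1 - 2 * ⌊α * n⌋₊ ≤ 2 * ((n / 2 - ⌊α * n⌋₊ : ℕ) : ℝ) := by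
    have : n ≤ 2 * (n / 2 - ⌊α * n⌋₊) + 2 * ⌊α * n⌋₊ + 1 := by omega
    have : (n : ℝ) ≤ 2 * ((n / 2 - ⌊α * n⌋₊ : ℕ) : ℝ) + 2 * ⌊α * n⌋₊ + 1 := by exact_mod_cast this
    linarith
  have : (2 * n : ℝ) ≤ K * ((n / 2 - ⌊α * n⌋₊ : ℕ) : ℝ) := by nlinarith
  exact_mod_cast this

theorem two_pow_mul_pow_le_inv_two_pow {n m K : ℕ} {x : ℝ≥0∞} (hx : x ≤ 2⁻¹ ^ K)
    (h : 2 * n ≤ K * m) : 2 ^ n * x ^ m ≤ 2⁻¹ ^ n := by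
  calc 2 ^ n * x ^ m ≤ 2 ^ n * 2⁻¹ ^ (K * m) := by rw [pow_mul]; gcongr
    _ ≤ 2 ^ n * 2⁻¹ ^ (2 * n) := by
      gcongr 2 ^ n * ?_
      exact pow_le_pow_of_le_one bot_le ENNReal.one_half_lt_one.le h
    _ = 2⁻¹ ^ n := by
      rw [two_mul, pow_add, ← mul_assoc, ← mul_pow, ENNReal.mul_inv_cancel two_ne_zero
        ENNReal.ofNat_ne_top, one_pow, one_mul]

theorem unifCube_setOf_isHamiltonian_le {d n : ℕ} (hd : d ≠ 0) (hn : n ≠ 0) (c : NNReal)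
    {H : SimpleGraph (Fin n)} (A : Finset (Fin n)) (hH : ∀ i j, H.Adj i j → i ∈ A ∨ j ∈ A) :
    unifCube d n {x | (H ⊔ geoGraph d n ((c / n) ^ ((1 : ℝ) / d)) x).IsHamiltonian} ≤
      2 ^ n * (c * volume (Metric.ball (0 : EuclideanSpace ℝ (Fin d)) 1)) ^ (n / 2 - A.card) := by
  set r : ℝ := (c / n) ^ ((1 : ℝ) / d)
  set V := volume (Metric.ball (0 : EuclideanSpace ℝ (Fin d)) 1)
  have hrd : r ^ d = c / n := by
    rw [← Real.rpow_inv_natCast_pow (x := c / n) (by positivity) hd, ← one_div]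
  have hnq : n * (ENNReal.ofReal (r ^ d) * V) = c * V := by
    rw [hrd, ← mul_assoc, ← ENNReal.ofReal_natCast, ← ENNReal.ofReal_mul (by positivity),
      mul_div_cancel₀ _ (by exact_mod_cast hn), ENNReal.ofReal_coe_nnreal]
  calc unifCube d n {x | (H ⊔ geoGraph d n r x).IsHamiltonian}
      ≤ n.choose (n / 2 - A.card) * (n : ℝ≥0∞) ^ (n / 2 - A.card) *
          (ENNReal.ofReal (r ^ d) * V) ^ (n / 2 - A.card) := by
        rw [unifCube_eq_pi]
        exact measure_pi_isHamiltonian_sup_geoGraph_le _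
          (fun z => volume_restrict_unitCube_closedBall_le z (by positivity)) A hH
    _ = n.choose (n / 2 - A.card) * (c * V) ^ (n / 2 - A.card) := by
        rw [mul_assoc, ← mul_pow, hnq]
    _ ≤ 2 ^ n * (c * V) ^ (n / 2 - A.card) := by
        gcongr
        exact_mod_cast Nat.choose_le_two_pow _ _

/-- For every `d ≥ 1` and constant `α ∈ (0,1/2)` there exists `c > 0` such that if `H` is
the complete bipartite `n`-vertex graph with parts of sizes `⌊αn⌋` and `n - ⌊αn⌋`, then
a.a.s. `H ∪ G^d(n, (c/n)^{1/d})` is not Hamiltonian. -/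
theorem not_hamiltonian_complete_bipartite_perturbed :
    ∀ d : ℕ, 1 ≤ d → ∀ α : ℝ, 0 < α → α < 1 / 2 →
    ∃ c : ℝ, 0 < c ∧
      ∀ A : (n : ℕ) → Finset (Fin n), (∀ n : ℕ, (A n).card = ⌊α * n⌋₊) →
      ∀ H : (n : ℕ) → SimpleGraph (Fin n),
      (∀ n : ℕ, ∀ i j : Fin n,
        (H n).Adj i j ↔ ((i ∈ A n ∧ j ∉ A n) ∨ (i ∉ A n ∧ j ∈ A n))) →
      Tendsto
        (fun n : ℕ =>
          unifCube d n
            {x | ¬ ((H n) ⊔ geoGraph d n ((c / n) ^ ((1 : ℝ) / d)) x).IsHamiltonian})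
        atTop (nhds (1 : ENNReal)) := by
  intro d hd α hα hα2
  obtain ⟨K, hK⟩ := exists_two_mul_le_mul_half_sub_floor hα.le hα2
  set V := volume (Metric.ball (0 : EuclideanSpace ℝ (Fin d)) 1)
  obtain ⟨c, hc, hcV⟩ := ENNReal.exists_nnreal_pos_mul_lt (measure_ball_lt_top : V < ∞).ne
    (pow_ne_zero K (ENNReal.inv_ne_zero.mpr (by norm_num : (2 : ℝ≥0∞) ≠ ∞)))
  refine ⟨c, hc, fun A hA H hH => tendsto_measure_compl_of_tendsto_zero ?_⟩
  refine tendsto_of_tendsto_of_tendsto_of_le_of_le' tendsto_const_nhds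
    (ENNReal.tendsto_pow_atTop_nhds_zero_of_lt_one ENNReal.one_half_lt_one)
    (Eventually.of_forall fun _ => bot_le) (eventually_atTop.mpr ⟨max K 1, fun n hn => ?_⟩)
  calc unifCube d n {x | (H n ⊔ geoGraph d n ((c / n) ^ ((1 : ℝ) / d)) x).IsHamiltonian}
      ≤ 2 ^ n * (c * V) ^ (n / 2 - (A n).card) :=
        unifCube_setOf_isHamiltonian_le (by omega) (by omega) c (A n) fun i j hij => by
          rcases (hH n i j).mp hij with h | h
          exacts [Or.inl h.1, Or.inr h.2]
    _ ≤ 2⁻¹ ^ n :=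
        two_pow_mul_pow_le_inv_two_pow hcV.le (hA n ▸ hK n (le_of_max_le_left hn))
end

section
/- For every integer d ≥ 1 there exists K_0 such that the following holds for all K ≥ K_0 and all sufficiently large n (depending on K and d). Let s > 0 with 1/s a positive integer và K = s^d·n, tessellate [0,1]^d into the s^{−d} cells of side s, and let P be a set of n points of [0,1]^d none lying on a cell boundary. Let Γ be the graph whose vertices are the cells that are dense with respect to P, with two cells adjacent whenever they are friends. If the number of cells sparse with respect to P is at most e^{−K/2}·n, then the number of connected components of Γ is at most e^{−K/3}·n. -/
/-- The half-open cell of the side-`1/m` tessellation of `[0,1]^d` indexed by `v`. -/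
def cell (d m : ℕ) (v : Fin d → Fin m) : Set (EuclideanSpace ℝ (Fin d)) :=
  {x | ∀ k : Fin d, (v k : ℝ) / m ≤ x k ∧ x k < ((v k : ℝ) + 1) / m}

/-- Two cells are friends if their closures intersect. -/
def IsFriend (d m : ℕ) (v w : Fin d → Fin m) : Prop :=
  (closure (cell d m v) ∩ closure (cell d m w)).Nonempty

/-- A cell is sparse with respect to the points `x` if it contains at most `R = 2·3^d`
of them. -/
def IsSparse (d m n : ℕ) (x : Fin n → EuclideanSpace ℝ (Fin d))
    (v : Fin d → Fin m) : Prop :=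
  {i : Fin n | x i ∈ cell d m v}.ncard ≤ 2 * 3 ^ d

/-- The number of sparse cells with respect to the points `x`. -/
noncomputable def sparseCount (d m n : ℕ)
    (x : Fin n → EuclideanSpace ℝ (Fin d)) : ℕ :=
  {v : Fin d → Fin m | IsSparse d m n x v}.ncard

/-- The graph `Γ` whose vertices are the dense cells, two of them adjacent whenever they
are friends. -/
def denseGraph (d m n : ℕ) (x : Fin n → EuclideanSpace ℝ (Fin d)) :
    SimpleGraph {v : Fin d → Fin m // ¬ IsSparse d m n x v} :=
  SimpleGraph.fromRel fun v w => IsFriend d m v.1 w.1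

/-!
Order the cells by the sum of their coordinates. In every component of `Γ` a cell of
maximal height has no dense upper neighbour, so it is either the top corner cell or the
lower neighbour of a sparse cell. As a sparse cell is the upper neighbour of at most one
cell in each direction, `Γ` has at most `1 + d · #sparse` components; with at most
`e^{-K/2} n` sparse cells this is at most `e^{-K/3} n` once `K ≥ 12 d` and
`n ≥ 2 e^{K/3}`.
-/

open Real

namespace SimpleGraph

variable {V β : Type*} [Finite V] [LinearOrder β] (G : SimpleGraph V) (h : V → β)

lemma ConnectedComponent.exists_mem_supp_forall_adj_le (C : G.ConnectedComponent) :
    ∃ v ∈ C.supp, ∀ u, G.Adj v u → h u ≤ h v := by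
  obtain ⟨v, hvC, hmax⟩ := C.supp.exists_max_image h C.supp.toFinite C.nonempty_supp
  refine ⟨v, hvC, fun u hvu => hmax u ?_⟩
  rw [mem_supp_iff] at hvC ⊢
  rw [← hvC]
  exact ConnectedComponent.sound hvu.reachable.symm

lemma natCard_connectedComponent_le_ncard_forall_adj_le :
    Nat.card G.ConnectedComponent ≤ {v | ∀ u, G.Adj v u → h u ≤ h v}.ncard := by
  rw [← Nat.card_coe_set_eq]
  refine Nat.card_le_card_of_surjective (fun v => G.connectedComponentMk v.1) fun C => ?_
  obtain ⟨v, hvC, hv⟩ := C.exists_mem_supp_forall_adj_le G h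
  exact ⟨⟨v, hv⟩, hvC⟩

end SimpleGraph

section Grid

variable {d m : ℕ}

def cellHeight (v : Fin d → Fin m) : ℕ := ∑ k, (v k : ℕ)

def cellUp (v : Fin d → Fin m) (k : Fin d) (hk : (v k : ℕ) + 1 < m) : Fin d → Fin m :=
  Function.update v k ⟨v k + 1, hk⟩

def cellDown (w : Fin d → Fin m) (k : Fin d) : Fin d → Fin m :=
  Function.update w k ⟨w k - 1, (Nat.sub_le _ _).trans_lt (w k).2⟩

lemma cellDown_cellUp (v : Fin d → Fin m) (k : Fin d) (hk : (v k : ℕ) + 1 < m) :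
    cellDown (cellUp v k hk) k = v := by
  simp [cellDown, cellUp]

lemma cellHeight_cellUp (v : Fin d → Fin m) (k : Fin d) (hk : (v k : ℕ) + 1 < m) :
    cellHeight (cellUp v k hk) = cellHeight v + 1 := by
  rw [cellHeight, cellUp]
  simp_rw [Function.apply_update (fun _ (i : Fin m) => (i : ℕ))]
  rw [Finset.sum_update_of_mem (Finset.mem_univ k), cellHeight,
    Finset.sum_eq_add_sum_sdiff_singleton_of_mem (Finset.mem_univ k)]
  ring

lemma closure_cell (hm : 0 < m) (v : Fin d → Fin m) :
    closure (cell d m v) = {x | ∀ k, (v k : ℝ) / m ≤ x k ∧ x k ≤ ((v k : ℝ) + 1) / m} := by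
  have hm' : (0 : ℝ) < m := by exact_mod_cast hm
  have hlt : ∀ k, (v k : ℝ) / m < ((v k : ℝ) + 1) / m := fun k => by gcongr; linarith
  have hcell : cell d m v = PiLp.homeomorph 2 (fun _ : Fin d => ℝ) ⁻¹'
      Set.univ.pi fun k => Set.Ico ((v k : ℝ) / m) (((v k : ℝ) + 1) / m) := by
    ext y
    exact ⟨fun hy k _ => hy k, fun hy k => hy k (Set.mem_univ k)⟩
  rw [hcell, ← Homeomorph.preimage_closure, closure_pi_set]
  ext y
  simp only [Set.mem_preimage, Set.mem_univ_pi, closure_Ico (hlt _).ne, Set.mem_Icc]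
  rfl

/-- The upper corner of `v` is a lower corner of `cellUp v k hk`. -/
lemma isFriend_cellUp (v : Fin d → Fin m) (k : Fin d) (hk : (v k : ℕ) + 1 < m) :
    IsFriend d m v (cellUp v k hk) := by
  have hm : 0 < m := (Nat.zero_le _).trans_lt hk
  have hm' : (0 : ℝ) < m := by exact_mod_cast hm
  refine ⟨WithLp.toLp 2 fun j => ((v j : ℝ) + 1) / m, ?_, ?_⟩
  · rw [closure_cell hm]
    intro j
    exact ⟨div_le_div_of_nonneg_right (by linarith) hm'.le, le_rfl⟩
  · rw [closure_cell hm]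
    intro j
    by_cases hj : j = k
    · subst hj
      simp only [cellUp, Function.update_self]
      push_cast
      exact ⟨le_rfl, div_le_div_of_nonneg_right (by linarith) hm'.le⟩
    · simp only [cellUp, Function.update_of_ne hj]
      exact ⟨div_le_div_of_nonneg_right (by linarith) hm'.le, le_rfl⟩

end Grid

section DenseGraph

variable {d m n : ℕ} (x : Fin n → EuclideanSpace ℝ (Fin d))

lemma isSparse_cellUp_of_forall_adj_le (v : {v : Fin d → Fin m // ¬ IsSparse d m n x v})
    (hv : ∀ u, (denseGraph d m n x).Adj v u → cellHeight u.1 ≤ cellHeight v.1)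
    (k : Fin d) (hk : (v.1 k : ℕ) + 1 < m) : IsSparse d m n x (cellUp v.1 k hk) := by
  by_contra hdense
  have hadj : (denseGraph d m n x).Adj v ⟨cellUp v.1 k hk, hdense⟩ := by
    rw [denseGraph, SimpleGraph.fromRel_adj]
    refine ⟨fun h => ?_, Or.inl (isFriend_cellUp v.1 k hk)⟩
    have := congrArg (cellHeight ∘ Subtype.val) h
    simp [cellHeight_cellUp] at this
  have := hv _ hadj
  rw [cellHeight_cellUp] at this
  omega

lemma val_image_setOf_forall_adj_le_subset :
    Subtype.val '' {v | ∀ u, (denseGraph d m n x).Adj v u → cellHeight u.1 ≤ cellHeight v.1} ⊆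
      {v | ∀ k, (v k : ℕ) + 1 = m} ∪
        ⋃ k ∈ Finset.univ, (cellDown · k) '' {w | IsSparse d m n x w} := by
  rintro _ ⟨v, hv, rfl⟩
  by_cases htop : ∀ k, (v.1 k : ℕ) + 1 = m
  · exact Or.inl htop
  · obtain ⟨k, hk⟩ := not_forall.1 htop
    have hk : (v.1 k : ℕ) + 1 < m := lt_of_le_of_ne (v.1 k).2 hk
    exact Or.inr (Set.mem_iUnion₂.2 ⟨k, Finset.mem_univ k,
      _, isSparse_cellUp_of_forall_adj_le x v hv k hk, cellDown_cellUp _ _ _⟩)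

theorem card_connectedComponent_denseGraph_le :
    Nat.card (denseGraph d m n x).ConnectedComponent ≤ 1 + d * sparseCount d m n x := by
  have htop : {v : Fin d → Fin m | ∀ k, (v k : ℕ) + 1 = m}.ncard ≤ 1 :=
    (Set.ncard_le_one_iff (Set.toFinite _)).2 fun ha hb =>
      funext fun k => Fin.ext (by have := ha k; have := hb k; omega)
  calc Nat.card (denseGraph d m n x).ConnectedComponent
      ≤ {v | ∀ u, (denseGraph d m n x).Adj v u → cellHeight u.1 ≤ cellHeight v.1}.ncard :=
        (denseGraph d m n x).natCard_connectedComponent_le_ncard_forall_adj_le _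
    _ = (Subtype.val '' _).ncard := (Set.ncard_image_of_injective _ Subtype.val_injective).symm
    _ ≤ ({v | ∀ k, (v k : ℕ) + 1 = m} ∪
          ⋃ k ∈ Finset.univ, (cellDown · k) '' {w | IsSparse d m n x w}).ncard :=
        Set.ncard_le_ncard (val_image_setOf_forall_adj_le_subset x)
    _ ≤ 1 + ∑ k : Fin d, ((cellDown · k) '' {w | IsSparse d m n x w}).ncard :=
        (Set.ncard_union_le _ _).trans (add_le_add htop (Finset.set_ncard_biUnion_le _ _))
    _ ≤ 1 + ∑ _k : Fin d, sparseCount d m n x := by gcongr; exact Set.ncard_image_le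
    _ = 1 + d * sparseCount d m n x := by simp

end DenseGraph

lemma one_add_mul_le_exp_mul {a K n s : ℝ} (ha : 0 ≤ a) (hK : 12 * a ≤ K)
    (hn : 2 * exp (K / 3) ≤ n) (hs : s ≤ exp (-K / 2) * n) :
    1 + a * s ≤ exp (-K / 3) * n := by
  have hn0 : 0 ≤ n := (by positivity : (0 : ℝ) ≤ 2 * exp (K / 3)).trans hn
  have hone : 2 ≤ exp (-K / 3) * n :=
    calc (2 : ℝ) = exp (-K / 3) * (2 * exp (K / 3)) := by
          rw [mul_left_comm, ← exp_add, neg_div, neg_add_cancel, exp_zero, mul_one]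
      _ ≤ exp (-K / 3) * n := by gcongr
  have hcoef : 2 * a * exp (-K / 2) ≤ exp (-K / 3) :=
    calc 2 * a * exp (-K / 2) ≤ exp (K / 6) * exp (-K / 2) := by
          gcongr; linarith [add_one_le_exp (K / 6)]
      _ = exp (-K / 3) := by rw [← exp_add]; ring_nf
  calc 1 + a * s ≤ 1 + a * (exp (-K / 2) * n) := by gcongr
    _ = 1 + 2 * a * exp (-K / 2) * n / 2 := by ring
    _ ≤ 1 + exp (-K / 3) * n / 2 := by gcongr
    _ ≤ exp (-K / 3) * n := by linarith

theorem few_components_of_dense_graph_general (d : ℕ) :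
    ∃ K₀ : ℝ, ∀ K : ℝ, K₀ ≤ K → ∃ N : ℕ, ∀ n : ℕ, N ≤ n →
      ∀ m : ℕ, 0 < m → K = (n : ℝ) / (m : ℝ) ^ d →
      ∀ x : Fin n → EuclideanSpace ℝ (Fin d),
        Function.Injective x →
        (∀ i : Fin n, ∀ k : Fin d, x i k ∈ Set.Icc (0 : ℝ) 1) →
        (∀ i : Fin n, ∀ k : Fin d, ∀ j : ℕ, x i k * m ≠ j) →
        ((sparseCount d m n x : ℝ) ≤ Real.exp (-K / 2) * n) →
        (Nat.card (denseGraph d m n x).ConnectedComponent : ℝ)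
          ≤ Real.exp (-K / 3) * n := by
  refine ⟨12 * d, fun K hK => ⟨⌈2 * exp (K / 3)⌉₊, fun n hn m _ _ x _ _ _ hsparse => ?_⟩⟩
  have hn' : 2 * exp (K / 3) ≤ n := (Nat.le_ceil _).trans (by exact_mod_cast hn)
  calc (Nat.card (denseGraph d m n x).ConnectedComponent : ℝ)
      ≤ 1 + d * sparseCount d m n x := by exact_mod_cast card_connectedComponent_denseGraph_le x
    _ ≤ exp (-K / 3) * n := one_add_mul_le_exp_mul (Nat.cast_nonneg d) hK hn' hsparse

/-- For every `d ≥ 1` there is `K₀` such that for all `K ≥ K₀` and all sufficiently large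
`n`: if `1/s = m ∈ ℕ`, `K = s^d·n`, and `P` is a set of `n` points of `[0,1]^d` none on a
cell boundary with at most `e^{-K/2}·n` sparse cells, then the graph `Γ` on dense cells
has at most `e^{-K/3}·n` connected components. -/
theorem few_components_of_dense_graph (d : ℕ) (hd : 1 ≤ d) :
    ∃ K₀ : ℝ, ∀ K : ℝ, K₀ ≤ K → ∃ N : ℕ, ∀ n : ℕ, N ≤ n →
      ∀ m : ℕ, 0 < m → K = (n : ℝ) / (m : ℝ) ^ d →
      ∀ x : Fin n → EuclideanSpace ℝ (Fin d),
        Function.Injective x →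
        (∀ i : Fin n, ∀ k : Fin d, x i k ∈ Set.Icc (0 : ℝ) 1) →
        (∀ i : Fin n, ∀ k : Fin d, ∀ j : ℕ, x i k * m ≠ j) →
        ((sparseCount d m n x : ℝ) ≤ Real.exp (-K / 2) * n) →
        (Nat.card (denseGraph d m n x).ConnectedComponent : ℝ)
          ≤ Real.exp (-K / 3) * n :=
  few_components_of_dense_graph_general d
end

section
/- Let d ≥ 1 be an integer, r > 0 and n ≥ 1. For a tuple x = (x_1,…,x_n) ∈ ([0,1]^d)^n, let f(x) denote the number of indices i ∈ {1,…,n} that are isolated in the geometric graph on vertex set {1,…,n} in which distinct i, j are adjacent iff ‖x_i − x_j‖ ≤ r (Euclidean norm). If two tuples x, y ∈ ([0,1]^d)^n differ in exactly one coordinate, then |f(x) − f(y)| ≤ 2·(2√d)^d + 1. -/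
open Metric MeasureTheory Module
open scoped ENNReal

/-- The number of isolated vertices of the geometric graph with positions `x` and
radius `r`. -/
noncomputable def isolatedCount (d n : ℕ) (r : ℝ)
    (x : Fin n → EuclideanSpace ℝ (Fin d)) : ℕ :=
  {i : Fin n | ∀ j : Fin n, ¬ (geoGraph d n r x).Adj i j}.ncard

lemma packing_lemma (d : ℕ) (r : ℝ) (hr : 0 < r) (c : EuclideanSpace ℝ (Fin d))
    (hd : 1 ≤ d)
    (T : Finset (EuclideanSpace ℝ (Fin d)))
    (hTc : ∀ p ∈ T, dist p c ≤ r)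
    (hsep : ∀ p ∈ T, ∀ q ∈ T, p ≠ q → r < dist p q) :
    T.card ≤ 3 ^ d := by
  have : Nontrivial (EuclideanSpace ℝ (Fin d)) := by
    have : Nonempty (Fin d) := ⟨⟨0, hd⟩⟩
    infer_instance
  have hfin : finrank ℝ (EuclideanSpace ℝ (Fin d)) = d := finrank_euclideanSpace_fin
  have hdisj : (T : Set (EuclideanSpace ℝ (Fin d))).PairwiseDisjoint
      (fun p => ball p (r / 2)) := by
    intro p hp q hq hpq
    refine Set.disjoint_left.mpr fun z hzp hzq => ?_
    have h1 : dist p z < r / 2 := mem_ball'.mp hzp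
    have h2 : dist z q < r / 2 := mem_ball.mp hzq
    have := dist_triangle p z q
    have := hsep p hp q hq hpq
    linarith
  have hsub : (⋃ p ∈ T, ball p (r / 2)) ⊆ ball c (3 / 2 * r) := by
    intro z hz
    simp only [Set.mem_iUnion] at hz
    obtain ⟨p, hp, hzp⟩ := hz
    have h1 : dist z p < r / 2 := mem_ball.mp hzp
    have h2 : dist p c ≤ r := hTc p hp
    have := dist_triangle z p c
    exact mem_ball.mpr (by linarith)
  have hvol : (T.card : ℝ≥0∞) * volume (ball (0 : EuclideanSpace ℝ (Fin d)) (r / 2))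
      ≤ volume (ball c (3 / 2 * r)) := by
    calc (T.card : ℝ≥0∞) * volume (ball (0 : EuclideanSpace ℝ (Fin d)) (r / 2))
        = ∑ p ∈ T, volume (ball p (r / 2)) := by
          rw [Finset.sum_congr rfl fun p _ => Measure.addHaar_ball_center volume p (r/2),
            Finset.sum_const, nsmul_eq_mul]
      _ = volume (⋃ p ∈ T, ball p (r / 2)) :=
          (measure_biUnion_finset hdisj fun p _ => measurableSet_ball).symm
      _ ≤ volume (ball c (3 / 2 * r)) := measure_mono hsub
  rw [Measure.addHaar_ball_of_pos volume c (by linarith : (0:ℝ) < 3/2*r),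
    Measure.addHaar_ball_of_pos volume (0 : EuclideanSpace ℝ (Fin d)) (by linarith : (0:ℝ) < r/2),
    hfin] at hvol
  set V := volume (ball (0 : EuclideanSpace ℝ (Fin d)) 1) with hV
  have hVpos : 0 < V := measure_ball_pos volume _ one_pos
  have hVfin : V ≠ ⊤ := measure_ball_lt_top.ne
  have key : (T.card : ℝ≥0∞) * ENNReal.ofReal ((r/2)^d) ≤ ENNReal.ofReal ((3/2*r)^d) := by
    rw [← mul_assoc] at hvol
    exact (ENNReal.mul_le_mul_iff_left hVpos.ne' hVfin).mp hvol
  have h32 : (3/2*r)^d = 3^d * (r/2)^d := by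
    rw [← mul_pow]; ring_nf
  rw [h32, ENNReal.ofReal_mul (by positivity)] at key
  have hpos : (0:ℝ≥0∞) < ENNReal.ofReal ((r/2)^d) := by
    rw [ENNReal.ofReal_pos]; positivity
  have key2 : (T.card : ℝ≥0∞) ≤ ENNReal.ofReal ((3:ℝ)^d) :=
    (ENNReal.mul_le_mul_iff_left hpos.ne' ENNReal.ofReal_ne_top).mp key
  have : ENNReal.ofReal ((3:ℝ)^d) = ((3^d : ℕ) : ℝ≥0∞) := by
    rw [← ENNReal.ofReal_natCast]; push_cast; ring_nf
  rw [this] at key2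
  exact_mod_cast key2

lemma geoGraph_adj_iff (d n : ℕ) (r : ℝ) (x : Fin n → EuclideanSpace ℝ (Fin d))
    (i j : Fin n) : (geoGraph d n r x).Adj i j ↔ i ≠ j ∧ dist (x i) (x j) ≤ r := by
  simp [geoGraph, SimpleGraph.fromRel_adj, dist_comm]

lemma isolatedCount_le_aux (d n : ℕ) (hd : 1 ≤ d) (r : ℝ) (hr : 0 < r)
    (x y : Fin n → EuclideanSpace ℝ (Fin d)) (i0 : Fin n)
    (h : ∀ j : Fin n, j ≠ i0 → x j = y j) :
    isolatedCount d n r x ≤ isolatedCount d n r y + (3 ^ d + 1) := by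
  classical
  set Ix := {i : Fin n | ∀ j : Fin n, ¬ (geoGraph d n r x).Adj i j} with hIx
  set Iy := {i : Fin n | ∀ j : Fin n, ¬ (geoGraph d n r y).Adj i j} with hIy
  set T : Set (Fin n) := {j | j ≠ i0 ∧ j ∈ Ix ∧ dist (y j) (y i0) ≤ r} with hT
  -- key separation property of T (distances in terms of y, which agrees with x off i0)
  have hsepT : ∀ j ∈ T, ∀ j' ∈ T, j ≠ j' → r < dist (y j) (y j') := by
    intro j hj j' hj' hne
    rw [← h j hj.1, ← h j' hj'.1]
    have hiso := hj.2.1 j'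
    rw [geoGraph_adj_iff] at hiso
    push_neg at hiso
    exact hiso hne
  -- T injects into a packing
  have hTcard : T.ncard ≤ 3 ^ d := by
    have hfin : T.Finite := Set.toFinite T
    set F := hfin.toFinset with hF
    have hinj : Set.InjOn (fun j => y j) F := by
      intro j hj j' hj' hyy
      by_contra hne
      have hlt := hsepT j (hfin.mem_toFinset.mp hj) j' (hfin.mem_toFinset.mp hj') hne
      have hz : dist (y j) (y j') = 0 := by
        simp [show y j = y j' from hyy]
      linarith
    have hcard : T.ncard = (F.image (fun j => y j)).card := by
      rw [Set.ncard_eq_toFinset_card T hfin, Finset.card_image_of_injOn hinj]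
    rw [hcard]
    apply packing_lemma d r hr (y i0) hd
    · intro p hp
      obtain ⟨j, hj, rfl⟩ := Finset.mem_image.mp hp
      exact (hfin.mem_toFinset.mp hj).2.2
    · intro p hp q hq hpq
      obtain ⟨j, hj, rfl⟩ := Finset.mem_image.mp hp
      obtain ⟨j', hj', rfl⟩ := Finset.mem_image.mp hq
      exact hsepT j (hfin.mem_toFinset.mp hj) j' (hfin.mem_toFinset.mp hj')
        (fun hjj => hpq (by rw [hjj]))
  -- Ix ⊆ Iy ∪ {i0} ∪ T
  have hsub : Ix ⊆ Iy ∪ ({i0} ∪ T) := by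
    intro j hj
    by_cases hji : j = i0
    · exact Or.inr (Or.inl (by simp [hji]))
    by_cases hjy : j ∈ Iy
    · exact Or.inl hjy
    right; right
    simp only [hIy, Set.mem_setOf_eq, not_forall, not_not] at hjy
    obtain ⟨k, hk⟩ := hjy
    rw [geoGraph_adj_iff] at hk
    have hki : k = i0 := by
      by_contra hki
      have hadj : (geoGraph d n r x).Adj j k := by
        rw [geoGraph_adj_iff, h j hji, h k hki]
        exact hk
      exact hj k hadj
    subst hki
    exact ⟨hji, hj, by rw [← h j hji]; rw [h j hji]; exact hk.2⟩
  calc isolatedCount d n r x = Ix.ncard := rfl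
    _ ≤ (Iy ∪ ({i0} ∪ T)).ncard := Set.ncard_le_ncard hsub (Set.toFinite _)
    _ ≤ Iy.ncard + ({i0} ∪ T).ncard := Set.ncard_union_le _ _
    _ ≤ Iy.ncard + (({i0} : Set (Fin n)).ncard + T.ncard) := by
        exact Nat.add_le_add_left (Set.ncard_union_le _ _) _
    _ ≤ isolatedCount d n r y + (3 ^ d + 1) := by
        rw [Set.ncard_singleton]
        have : Iy.ncard = isolatedCount d n r y := rfl
        omega

/-- The number of isolated vertices of a geometric graph is `(2·(2√d)^d + 1)`-Lipschitz
as a function of the positions: changing exactly one point changes it by at most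
`2·(2√d)^d + 1`. -/
theorem isolatedCount_lipschitz (d : ℕ) (hd : 1 ≤ d) (r : ℝ) (hr : 0 < r) (n : ℕ)
    (hn : 1 ≤ n) (x y : Fin n → EuclideanSpace ℝ (Fin d))
    (hxy : ∃ i₀ : Fin n, x i₀ ≠ y i₀ ∧ ∀ j : Fin n, j ≠ i₀ → x j = y j)
    (hx : ∀ i : Fin n, ∀ k : Fin d, x i k ∈ Set.Icc (0 : ℝ) 1)
    (hy : ∀ i : Fin n, ∀ k : Fin d, y i k ∈ Set.Icc (0 : ℝ) 1) :
    |(isolatedCount d n r x : ℝ) - (isolatedCount d n r y : ℝ)|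
      ≤ 2 * (2 * Real.sqrt d) ^ d + 1 := by
  obtain ⟨i0, hne, hj⟩ := hxy
  have h1 := isolatedCount_le_aux d n hd r hr x y i0 hj
  have h2 := isolatedCount_le_aux d n hd r hr y x i0 (fun j hj' => (hj j hj').symm)
  have hC : (3 : ℝ) ^ d ≤ 2 * (2 * Real.sqrt d) ^ d := by
    by_cases hd3 : 3 ≤ d
    · have hs := Real.sq_sqrt (show (0:ℝ) ≤ (d:ℝ) by positivity)
      have hsn := Real.sqrt_nonneg (d:ℝ)
      have hdd : (3:ℝ) ≤ (d:ℝ) := by exact_mod_cast hd3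
      have h32 : (3:ℝ) ≤ 2 * Real.sqrt d := by nlinarith
      calc (3:ℝ)^d ≤ (2 * Real.sqrt d)^d := pow_le_pow_left₀ (by norm_num) h32 d
        _ ≤ 2 * (2 * Real.sqrt d)^d := by nlinarith [pow_nonneg (by linarith : (0:ℝ) ≤ 2 * Real.sqrt d) d]
    · interval_cases d
      · simp [Real.sqrt_one]; norm_num
      · have hs : Real.sqrt 2 ^ 2 = 2 := Real.sq_sqrt (by norm_num)
        have hsn := Real.sqrt_nonneg (2:ℝ)
        push_cast
        nlinarith
  rw [abs_sub_le_iff]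
  constructor
  · have : (isolatedCount d n r x : ℝ) ≤ (isolatedCount d n r y : ℝ) + (3^d + 1) := by
      exact_mod_cast h1
    push_cast at this
    linarith
  · have : (isolatedCount d n r y : ℝ) ≤ (isolatedCount d n r x : ℝ) + (3^d + 1) := by
      exact_mod_cast h2
    push_cast at this
    linarith
end
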